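/- Let (R,m) be a Noetherian local ring and {I_n}, {J_n} filtrations with J_n ⊆ I_n and λ_R(I_n/J_n) < ∞ for all n ≥ 1. Then for each n there is a short exact sequence 0 → I_n/J_n → H^0_m(R/J_n) → H^0_m(R/I_n) → 0 of R-modules; in particular λ_R(H^0_m(R/J_n)) = λ_R(H^0_m(R/I_n)) + λ_R(I_n/J_n). -/

import Mathlib

/-- The saturation `I : J^∞ = ⋃ₖ (I : Jᵏ)`. -/
noncomputable def sat {A : Type*} [CommRing A] (I J : Ideal A) : Ideal A :=
  ⨆ n : ℕ, Submodule.colon I ((J ^ n : Ideal A) : Set A)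

/-- The quotient module `S/I` of two ideals (with `I ⊆ S` in the intended use). -/
noncomputable abbrev idealQuot {A : Type*} [CommRing A] (S I : Ideal A) :=
  S ⧸ (Submodule.comap S.subtype I)

/-- The length of a module, expressed as the Krull dimension of its submodule lattice. -/
noncomputable def mlength (R M : Type*) [CommRing R] [AddCommGroup M] [Module R M] : ℕ∞ :=
  (Order.krullDim (Submodule R M)).unbotD 0

/-- The zeroth local cohomology `H⁰_m(M)`: the submodule of elements annihilated by some
power of `m`. -/
noncomputable def H0 {R : Type*} (M : Type*) [CommRing R] [AddCommGroup M] [Module R M]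
    (m : Ideal R) : Submodule R M :=
  ⨆ n : ℕ, Submodule.torsionBySet R M ↑(m ^ n)

/-!
Since `I/J` is killed by a fixed power `mᵗ` (it has finite length over a local ring), every
lift to `R/J` of an element of `H⁰_m(R/I)` killed by `mᵏ` is killed by `mᵗ⁺ᵏ`. Hence `H⁰_m`
carries the short exact sequence `0 → I/J → R/J → R/I → 0` to a short exact sequence, and
length is additive along it.
-/

open Submodule

lemma mlength_eq_length (R M : Type*) [CommRing R] [AddCommGroup M] [Module R M] :
    mlength R M = Module.length R M := by
  rw [mlength, ← Module.coe_length, WithBot.unbotD_coe]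

lemma IsFiniteLength.exists_pow_maximalIdeal_le_annihilator {R M : Type*} [CommRing R]
    [IsLocalRing R] [AddCommGroup M] [Module R M] (h : IsFiniteLength R M) :
    ∃ k : ℕ, IsLocalRing.maximalIdeal R ^ k ≤ Module.annihilator R M := by
  induction h with
  | of_subsingleton => exact ⟨0, by simp [Module.annihilator_eq_top_iff.2 ‹_›]⟩
  | @of_simple_quotient M _ _ N _ _ ih =>
    obtain ⟨k, hk⟩ := ih
    have hm : IsLocalRing.maximalIdeal R ≤ Module.annihilator R (M ⧸ N) :=
      (IsLocalRing.eq_maximalIdeal IsSimpleModule.annihilator_isMaximal).ge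
    refine ⟨k + 1, pow_succ (IsLocalRing.maximalIdeal R) k ▸
      Ideal.mul_le.2 fun c hc b hb => Module.mem_annihilator.2 fun x => ?_⟩
    have hbx : b • x ∈ N := by
      simpa [← Quotient.mk_smul] using Module.mem_annihilator.1 (hm hb) (Submodule.Quotient.mk x)
    rw [mul_smul]
    exact congrArg Subtype.val (Module.mem_annihilator.1 (hk hc) ⟨b • x, hbx⟩)

section H0

variable {R M P : Type*} [CommRing R] [AddCommGroup M] [Module R M] [AddCommGroup P] [Module R P]
  {m : Ideal R}

lemma mem_H0_iff {x : M} : x ∈ H0 M m ↔ ∃ k : ℕ, ∀ c ∈ m ^ k, c • x = 0 := by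
  rw [H0, mem_iSup_of_directed]
  · simp only [mem_torsionBySet_iff, Subtype.forall, SetLike.mem_coe]
  · intro i j
    exact ⟨max i j,
      torsionBySet_le_torsionBySet_of_subset (Ideal.pow_le_pow_right (le_max_left i j)),
      torsionBySet_le_torsionBySet_of_subset (Ideal.pow_le_pow_right (le_max_right i j))⟩

lemma torsionBySet_pow_le_H0 (k : ℕ) : torsionBySet R M ↑(m ^ k) ≤ H0 M m :=
  le_iSup (fun n : ℕ => torsionBySet R M ↑(m ^ n)) k

lemma map_mem_H0 (g : M →ₗ[R] P) : ∀ x ∈ H0 M m, g x ∈ H0 P m := by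
  intro x hx
  obtain ⟨k, hk⟩ := mem_H0_iff.1 hx
  exact mem_H0_iff.2 ⟨k, fun c hc => by rw [← map_smul, hk c hc, map_zero]⟩

lemma surjective_restrict_H0 {g : M →ₗ[R] P} (hg : Function.Surjective g) {t : ℕ}
    (hker : LinearMap.ker g ≤ torsionBySet R M ↑(m ^ t)) :
    Function.Surjective (g.restrict (p := H0 M m) (q := H0 P m) (map_mem_H0 g)) := by
  rintro ⟨y, hy⟩
  obtain ⟨k, hk⟩ := mem_H0_iff.1 hy
  obtain ⟨x, rfl⟩ := hg y
  have hx : m ^ t * m ^ k ≤ Ideal.torsionOf R M x := Ideal.mul_le.2 fun a ha b hb => by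
    have hbx : b • x ∈ LinearMap.ker g := by rw [LinearMap.mem_ker, map_smul, hk b hb]
    rw [Ideal.mem_torsionOf_iff, mul_smul]
    exact (mem_torsionBySet_iff _ _).1 (hker hbx) ⟨a, ha⟩
  refine ⟨⟨x, mem_H0_iff.2 ⟨t + k, fun c hc => ?_⟩⟩, rfl⟩
  exact (Ideal.mem_torsionOf_iff x c).1 (hx (pow_add m t k ▸ hc))

theorem exists_exact_H0_of_exact {A : Type*} [AddCommGroup A] [Module R A]
    {f : A →ₗ[R] M} {g : M →ₗ[R] P} (hf : Function.Injective f) (hg : Function.Surjective g)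
    (hfg : Function.Exact f g) {t : ℕ} (ht : m ^ t ≤ Module.annihilator R A) :
    ∃ (f' : A →ₗ[R] H0 M m) (g' : H0 M m →ₗ[R] H0 P m),
      Function.Injective f' ∧ Function.Surjective g' ∧ Function.Exact f' g' := by
  have hrange : LinearMap.range f ≤ torsionBySet R M ↑(m ^ t) := by
    rintro _ ⟨a, rfl⟩
    exact (mem_torsionBySet_iff _ _).2 fun c => by
      rw [← map_smul, Module.mem_annihilator.1 (ht c.2), map_zero]
  refine ⟨f.codRestrict (H0 M m) fun a => torsionBySet_pow_le_H0 t (hrange ⟨a, rfl⟩),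
    g.restrict (map_mem_H0 g), fun a b h => hf (congrArg Subtype.val h),
    surjective_restrict_H0 hg (hfg.linearMap_ker_eq ▸ hrange), ?_⟩
  rintro ⟨y, hy⟩
  simp [Subtype.ext_iff, hfg y]

end H0

namespace idealQuot

variable {R : Type*} [CommRing R]

noncomputable def subtype (I J : Ideal R) : idealQuot I J →ₗ[R] R ⧸ J :=
  (Submodule.comap (Submodule.subtype I) J).mapQ J (Submodule.subtype I) le_rfl

lemma subtype_injective (I J : Ideal R) : Function.Injective (subtype I J) := by
  rw [← LinearMap.ker_eq_bot, subtype, ker_mapQ, mkQ_map_self]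

lemma exact_subtype_factor {I J : Ideal R} (h : J ≤ I) :
    Function.Exact (subtype I J) (factor h) := by
  rw [LinearMap.exact_iff, subtype, factor, ker_mapQ, range_mapQ, range_subtype, comap_id]

end idealQuot

theorem stmt6_general {R : Type*} [CommRing R] [IsLocalRing R]
    (I J : ℕ → Ideal R)
    (hJI : ∀ n, J n ≤ I n)
    (hfin : ∀ n, 1 ≤ n → IsFiniteLength R (idealQuot (I n) (J n))) :
    ∀ n, 1 ≤ n →
      ∃ (f : idealQuot (I n) (J n) →ₗ[R] ↥(H0 (R ⧸ J n) (IsLocalRing.maximalIdeal R)))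
        (g : ↥(H0 (R ⧸ J n) (IsLocalRing.maximalIdeal R)) →ₗ[R]
          ↥(H0 (R ⧸ I n) (IsLocalRing.maximalIdeal R))),
        Function.Injective f ∧ Function.Surjective g ∧ Function.Exact f g ∧
        mlength R (↥(H0 (R ⧸ J n) (IsLocalRing.maximalIdeal R)))
          = mlength R (↥(H0 (R ⧸ I n) (IsLocalRing.maximalIdeal R)))
            + mlength R (idealQuot (I n) (J n)) := by
  intro n hn
  obtain ⟨t, ht⟩ := (hfin n hn).exists_pow_maximalIdeal_le_annihilator
  obtain ⟨f, g, hf, hg, hfg⟩ := exists_exact_H0_of_exact (idealQuot.subtype_injective _ _)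
    (factor_surjective (hJI n)) (idealQuot.exact_subtype_factor (hJI n)) ht
  refine ⟨f, g, hf, hg, hfg, ?_⟩
  simp only [mlength_eq_length]
  rw [Module.length_eq_add_of_exact f g hf hg hfg, add_comm]

/-- if `(R,m)` is Noetherian local and `{I_n}`, `{J_n}` are filtrations with
`J_n ⊆ I_n` and `λ_R(I_n/J_n) < ∞` for `n ≥ 1`, then for each `n` there is a short exact
sequence `0 → I_n/J_n → H⁰_m(R/J_n) → H⁰_m(R/I_n) → 0`, and in particular
`λ_R(H⁰_m(R/J_n)) = λ_R(H⁰_m(R/I_n)) + λ_R(I_n/J_n)`. -/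
theorem stmt6 {R : Type*} [CommRing R] [IsNoetherianRing R] [IsLocalRing R]
    (I J : ℕ → Ideal R) (hI0 : I 0 = ⊤) (hJ0 : J 0 = ⊤)
    (hIanti : ∀ m n, m ≤ n → I n ≤ I m) (hJanti : ∀ m n, m ≤ n → J n ≤ J m)
    (hImul : ∀ m n, I m * I n ≤ I (m + n)) (hJmul : ∀ m n, J m * J n ≤ J (m + n))
    (hJI : ∀ n, J n ≤ I n)
    (hfin : ∀ n, 1 ≤ n → IsFiniteLength R (idealQuot (I n) (J n))) :
    ∀ n, 1 ≤ n →
      ∃ (f : idealQuot (I n) (J n) →ₗ[R] ↥(H0 (R ⧸ J n) (IsLocalRing.maximalIdeal R)))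
        (g : ↥(H0 (R ⧸ J n) (IsLocalRing.maximalIdeal R)) →ₗ[R]
          ↥(H0 (R ⧸ I n) (IsLocalRing.maximalIdeal R))),
        Function.Injective f ∧ Function.Surjective g ∧ Function.Exact f g ∧
        mlength R (↥(H0 (R ⧸ J n) (IsLocalRing.maximalIdeal R)))
          = mlength R (↥(H0 (R ⧸ I n) (IsLocalRing.maximalIdeal R)))
            + mlength R (idealQuot (I n) (J n)) :=
  stmt6_general I J hJI hfin
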